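/- arXiv:2309.04507 — 2 statements merged into one kernel-verified Lean document; each statement's English description precedes it below -/
import Mathlib

section
/- (Sharpness of the Lipschitz constant in Proposition 3.1.) For every T > 0 and every constant C < 2, there exist continuous paths S¹, S² : [0,T] → ℝ with S¹ ≠ S² and a time t ∈ [0,T] such that |Ξ(S¹)_t − Ξ(S²)_t| > C ‖S¹ − S²‖_∞. Hence the minimal Lipschitz constant of the drawdown functional with respect to the supremum norm is exactly 2. -/
open Set

/-- Running maximum of a path `S` at time `t`: `M(S)_t = sup_{k ∈ [0,t]} S_k`. -/
noncomputable def runMax (S : ℝ → ℝ) (t : ℝ) : ℝ := sSup (S '' Set.Icc 0 t)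

/-- Drawdown of a path `S` at time `t`: `Ξ(S)_t = sup_{k ∈ [0,t]} S_k - S_t`. -/
noncomputable def drawdown (S : ℝ → ℝ) (t : ℝ) : ℝ := runMax S t - S t

/-- **Sharpness of the Lipschitz constant in Proposition 3.1.** For every `T > 0`
and every constant `C < 2`, there exist continuous paths `S¹ ≠ S²` on `[0,T]` and a time
`t ∈ [0,T]` with `|Ξ(S¹)_t − Ξ(S²)_t| > C ‖S¹ − S²‖_∞`. Hence the minimal Lipschitz constant of
the drawdown functional with respect to the supremum norm is exactly `2`. -/
theorem drawdown_lipschitz_constant_sharp (T : ℝ) (hT : 0 < T) (C : ℝ) (hC : C < 2) :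
    ∃ S₁ S₂ : ℝ → ℝ, ContinuousOn S₁ (Set.Icc 0 T) ∧ ContinuousOn S₂ (Set.Icc 0 T) ∧
      ¬ Set.EqOn S₁ S₂ (Set.Icc 0 T) ∧
      ∃ t ∈ Set.Icc 0 T,
        C * sSup ((fun u => |S₁ u - S₂ u|) '' Set.Icc 0 T) <
          |drawdown S₁ t - drawdown S₂ t| := by
  refine ⟨fun _ => 0, fun u => 1 - 2 * u / T, continuousOn_const, ?_, ?_, T, ?_, ?_⟩
  · fun_prop (disch := positivity)
  · intro h
    have h0 := h (show (0:ℝ) ∈ Icc 0 T by constructor <;> simp [hT.le])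
    simp at h0
  · exact ⟨le_refl 0 |>.trans hT.le, le_refl T⟩
  · have h0T : (0:ℝ) ∈ Icc 0 T := ⟨le_refl 0, hT.le⟩
    have hbd : ∀ u ∈ Icc (0:ℝ) T, |1 - 2 * u / T| ≤ 1 := by
      intro u hu
      rw [abs_le]
      constructor
      · have : 2 * u / T ≤ 2 := by
          rw [div_le_iff₀ hT]
          nlinarith [hu.2]
        linarith
      · have : 0 ≤ 2 * u / T := by
          have := hu.1
          positivity
        linarith
    have hsup1 : sSup ((fun u => |(fun _ => (0:ℝ)) u - (1 - 2 * u / T)|) '' Icc 0 T) = 1 := by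
      apply IsGreatest.csSup_eq
      constructor
      · refine ⟨0, h0T, ?_⟩
        simp
      · rintro y ⟨u, hu, rfl⟩
        simp only [zero_sub, abs_neg]
        exact hbd u hu
    have hd1 : drawdown (fun _ => (0:ℝ)) T = 0 := by
      have : ((fun _ => (0:ℝ)) '' Icc 0 T) = {0} := by
        exact (Set.nonempty_Icc.2 hT.le).image_const 0
      simp [drawdown, runMax, this]
    have hd2 : drawdown (fun u => 1 - 2 * u / T) T = 2 := by
      have hmax : sSup ((fun u => 1 - 2 * u / T) '' Icc 0 T) = 1 := by
        apply IsGreatest.csSup_eq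
        constructor
        · refine ⟨0, h0T, ?_⟩
          simp
        · rintro y ⟨u, hu, rfl⟩
          exact (le_abs_self _).trans (hbd u hu)
      simp only [drawdown, runMax, hmax]
      field_simp
      norm_num
    rw [hsup1, hd1, hd2, mul_one]
    rw [show (0:ℝ) - 2 = -2 by ring, abs_neg]
    rw [abs_of_nonneg (by norm_num : (0:ℝ) ≤ 2)]
    exact hC
end

section
/- (Right derivative of drawdown at zero drawdown, second case of the dynamic system dξ_t = max(0, −dS_t) when ξ_t = 0.) Let T > 0, let S : [0,T] → ℝ be continuous, and let t ∈ [0,T) be such that Ξ(S)_t = 0 and S is differentiable at t (within [0,T]) with derivative S'(t). Then the drawdown path has a right derivative at t equal to max(−S'(t), 0), i.e. lim_{h → 0⁺} (Ξ(S)_{t+h} − Ξ(S)_t)/h = max(−S'(t), 0). -/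
open Set Filter

/-- **Right derivative of drawdown at zero drawdown.** Let `S` be continuous on
`[0,T]`, `t ∈ [0,T)` with `Ξ(S)_t = 0`, and suppose `S` is differentiable (within `[0,T]`) at
`t` with derivative `S'(t)`. Then the drawdown path has a right derivative at `t` equal to
`max(−S'(t), 0)`: `(Ξ(S)_{t+h} − Ξ(S)_t)/h → max(−S'(t), 0)` as `h → 0⁺` with
`t + h` restricted to `[0,T]`. -/
theorem drawdown_right_deriv_at_zero (T : ℝ) (hT : 0 < T) (S : ℝ → ℝ)
    (hS : ContinuousOn S (Set.Icc 0 T)) (t : ℝ) (ht : t ∈ Set.Ico 0 T)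
    (hzero : drawdown S t = 0) (d : ℝ)
    (hd : HasDerivWithinAt S d (Set.Icc 0 T) t) :
    Filter.Tendsto (fun h : ℝ => (drawdown S (t + h) - drawdown S t) / h)
      (nhdsWithin 0 {h : ℝ | 0 < h ∧ t + h ∈ Set.Icc 0 T})
      (nhds (max (-d) 0)) := by
  have hderiv := hasDerivWithinAt_iff_isLittleO.mp hd
  rw [Metric.tendsto_nhdsWithin_nhds]
  intro ε hε
  have hε3 : (0:ℝ) < ε/3 := by linarith
  have hev := hderiv.def hε3
  rw [eventually_nhdsWithin_iff, Metric.eventually_nhds_iff] at hev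
  obtain ⟨δ, hδ, hkey⟩ := hev
  refine ⟨δ, hδ, ?_⟩
  rintro h ⟨hh0, hth⟩ hdist
  rw [Real.dist_eq, sub_zero] at hdist
  have hhδ : h < δ := lt_of_abs_lt hdist
  have ht0 : 0 ≤ t := ht.1
  have hthT : t + h ≤ T := hth.2
  have hIcc : Set.Icc 0 (t+h) ⊆ Set.Icc 0 T := Set.Icc_subset_Icc le_rfl hthT
  have hbdd : BddAbove (S '' Set.Icc 0 (t+h)) :=
    (isCompact_Icc.image_of_continuousOn (hS.mono hIcc)).bddAbove
  have hbdd' : BddAbove (S '' Set.Icc 0 t) :=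
    (isCompact_Icc.image_of_continuousOn
      (hS.mono (Set.Icc_subset_Icc le_rfl (by linarith)))).bddAbove
  have hMt : runMax S t = S t := by
    have h0 := hzero; unfold drawdown at h0; linarith
  have hest : ∀ k, t ≤ k → k ≤ t + h → |S k - S t - (k - t) * d| ≤ ε/3 * h := by
    intro k hk1 hk2
    have hkT : k ∈ Set.Icc 0 T := ⟨by linarith, by linarith⟩
    have hdk : dist k t < δ := by
      rw [Real.dist_eq, abs_of_nonneg (by linarith : (0:ℝ) ≤ k - t)]; linarith
    have hk := hkey hdk hkT
    simp only [smul_eq_mul, Real.norm_eq_abs] at hk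
    calc |S k - S t - (k - t) * d| ≤ ε/3 * |k - t| := by
          convert hk using 3 <;> ring
      _ ≤ ε/3 * h := by
          rw [abs_of_nonneg (by linarith : (0:ℝ) ≤ k - t)]
          nlinarith
  set m := max (-d) 0 with hm
  have hmd : -d ≤ m := le_max_left _ _
  have hm0 : 0 ≤ m := le_max_right _ _
  have hSth : |S (t+h) - S t - h * d| ≤ ε/3 * h := by
    have hk := hest (t+h) (by linarith) le_rfl
    convert hk using 3
    ring
  have hne : (S '' Set.Icc 0 (t+h)).Nonempty :=
    Set.Nonempty.image _ (Set.nonempty_Icc.mpr (by linarith))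
  have hub : runMax S (t+h) ≤ S (t+h) + h * m + 2*(ε/3)*h := by
    apply csSup_le hne
    rintro y ⟨k, hk, rfl⟩
    have h3 := abs_le.mp hSth
    rcases le_total k t with hkt | hkt
    · have h1 : S k ≤ S t := by
        have h2 : S k ≤ runMax S t := le_csSup hbdd' ⟨k, ⟨hk.1, hkt⟩, rfl⟩
        rw [hMt] at h2; exact h2
      have h2 : -(d*h) ≤ h*m := by nlinarith
      linarith [h3.1, h3.2]
    · have hk2 : k ≤ t + h := hk.2
      have h4 := abs_le.mp (hest k hkt hk2)
      have h5 : d * (k - t - h) ≤ h * m := by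
        rcases le_or_gt 0 d with hd0 | hd0
        · nlinarith [mul_nonneg hd0 (by linarith : (0:ℝ) ≤ t + h - k), mul_nonneg hm0 hh0.le]
        · nlinarith [mul_nonneg (le_of_lt (neg_pos.mpr hd0)) (by linarith : (0:ℝ) ≤ k - t)]
      linarith [h4.2, h3.1]
  have hlb : S (t+h) + h * m - (ε/3)*h ≤ runMax S (t+h) := by
    rcases le_or_gt d 0 with hd0 | hd0
    · have hmem : S t ∈ S '' Set.Icc 0 (t+h) := ⟨t, ⟨ht0, by linarith⟩, rfl⟩
      have h1 := le_csSup hbdd hmem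
      have h3 := abs_le.mp hSth
      have hmeq : m = -d := max_eq_left (by linarith)
      rw [hmeq]
      unfold runMax
      linarith [h3.1, h3.2]
    · have hmem : S (t+h) ∈ S '' Set.Icc 0 (t+h) := ⟨t+h, ⟨by linarith, le_rfl⟩, rfl⟩
      have h1 := le_csSup hbdd hmem
      have hmeq : m = 0 := max_eq_right (by linarith)
      rw [hmeq]
      unfold runMax
      nlinarith [mul_pos hε3 hh0]
  rw [hzero, sub_zero]
  have hX : |runMax S (t+h) - S (t+h) - m*h| ≤ 2*(ε/3)*h := by
    rw [abs_le]; constructor <;> [linarith; linarith]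
  have heq : drawdown S (t+h) / h - m = (runMax S (t+h) - S (t+h) - m*h)/h := by
    unfold drawdown; field_simp
  rw [Real.dist_eq, heq, abs_div, abs_of_pos hh0, div_lt_iff₀ hh0]
  calc |runMax S (t+h) - S (t+h) - m*h| ≤ 2*(ε/3)*h := hX
    _ < ε * h := by nlinarith [mul_pos hε hh0]
end
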